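/- Let S be a stable cut of an unweighted connected graph G with maximum degree Δ=2 (a cycle), with a unique critical vertex u satisfying φ(S) < (m−Δ)/2. Then n is odd, x_S(u)=1, x_S(v)=0 for all v≠u, C_S=(n+1)/2, and φ(S)=(n−3)/2 = (m−Δ−1)/2. -/

import Mathlib

open Finset

variable {V : Type*} [Fintype V] [DecidableEq V]

/-- Number of edges at `v` crossing the cut `S`. -/
def gCrossDeg (G : SimpleGraph V) [DecidableRel G.Adj] (S : Finset V) (v : V) : ℕ :=
  (Finset.univ.filter fun u => G.Adj v u ∧ ((v ∈ S) ↔ (u ∉ S))).card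

/-- Number of crossing edges of the cut `S` (as a real). -/
noncomputable def gCut (G : SimpleGraph V) [DecidableRel G.Adj] (S : Finset V) : ℝ :=
  (∑ v, (gCrossDeg G S v : ℝ)) / 2

/-- Cut size after the failure of the vertex `x`: `C_{S−x,G−x} = C_S − d_S(x)`. -/
noncomputable def gCutMinus (G : SimpleGraph V) [DecidableRel G.Adj]
    (S : Finset V) (x : V) : ℝ :=
  gCut G S - gCrossDeg G S x

/-- Single-fault FT value `φ(S) = min_v C_{S−v,G−v}`. -/
noncomputable def gFt1 (G : SimpleGraph V) [DecidableRel G.Adj] (S : Finset V) : ℝ :=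
  sInf (Set.range (gCutMinus G S))

/-!
In a cycle every vertex has degree 2, so stability means every crossing degree is 1 or 2, and
uniqueness of the critical vertex forces `d_S(u) = 2` and `d_S(v) = 1` for `v ≠ u`. The crossing
degrees then sum to `n + 1`, which is twice the number of crossing edges, so `n` is odd,
`C_S = (n + 1) / 2` and `φ(S) = C_S − d_S(u) = (n − 3) / 2`.
-/

section CrossDeg

variable (G : SimpleGraph V) [DecidableRel G.Adj] (S : Finset V)

def cutGraph : SimpleGraph V where
  Adj v w := G.Adj v w ∧ ((v ∈ S) ↔ (w ∉ S))
  symm := ⟨fun _ _ h => ⟨h.1.symm, by tauto⟩⟩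
  loopless := ⟨fun v h => G.loopless.irrefl v h.1⟩

instance : DecidableRel (cutGraph G S).Adj := fun _ _ => instDecidableAnd

theorem gCrossDeg_eq_degree_cutGraph (v : V) : gCrossDeg G S v = (cutGraph G S).degree v := by
  rw [← SimpleGraph.card_neighborFinset_eq_degree, SimpleGraph.neighborFinset_eq_filter]
  rfl

theorem even_sum_gCrossDeg : Even (∑ v, gCrossDeg G S v) := by
  simp only [gCrossDeg_eq_degree_cutGraph, (cutGraph G S).sum_degrees_eq_twice_card_edges]
  exact even_two_mul _

theorem gCrossDeg_le_degree (v : V) : gCrossDeg G S v ≤ G.degree v := by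
  rw [gCrossDeg_eq_degree_cutGraph]
  exact SimpleGraph.degree_le_of_le fun _ _ h => h.1

theorem degree_le_two_mul_gCrossDeg {v : V}
    (hv : ((G.degree v : ℝ) - 1) / 2 < (gCrossDeg G S v : ℝ)) :
    G.degree v ≤ 2 * gCrossDeg G S v := by
  have : (G.degree v : ℝ) < 2 * gCrossDeg G S v + 1 := by linarith
  exact_mod_cast Nat.lt_succ_iff.mp (by exact_mod_cast this)

end CrossDeg

theorem Fintype.sum_eq_card_add_one {f : V → ℕ} {u : V} (hu : f u = 2)
    (hf : ∀ v, v ≠ u → f v = 1) : ∑ v, f v = Fintype.card V + 1 := by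
  rw [← Finset.sum_erase_add _ _ (Finset.mem_univ u), hu,
    Finset.sum_congr rfl fun v hv => hf v (Finset.ne_of_mem_erase hv), Finset.sum_const,
    Finset.card_erase_of_mem (Finset.mem_univ u), Finset.card_univ, smul_eq_mul, mul_one]
  have : 0 < Fintype.card V := Fintype.card_pos_iff.mpr ⟨u⟩
  omega

theorem gCrossDeg_eq_of_degree_eq_two {G : SimpleGraph V} [DecidableRel G.Adj]
    {S : Finset V} (hdeg : ∀ v, G.degree v = 2)
    (hstable : ∀ v, ((G.degree v : ℝ) - 1) / 2 < (gCrossDeg G S v : ℝ)) {u : V}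
    (huniq : ∀ v, v ≠ u → gCrossDeg G S v < gCrossDeg G S u) :
    gCrossDeg G S u = 2 ∧ ∀ v, v ≠ u → gCrossDeg G S v = 1 := by
  have hpos v : 1 ≤ gCrossDeg G S v := by
    have := degree_le_two_mul_gCrossDeg G S (hstable v)
    rw [hdeg v] at this
    omega
  have hle v : gCrossDeg G S v ≤ 2 := hdeg v ▸ gCrossDeg_le_degree G S v
  obtain ⟨w, huw⟩ := (G.degree_pos_iff_exists_adj u).mp (by rw [hdeg u]; norm_num)
  have hu : gCrossDeg G S u = 2 := le_antisymm (hle u) ((hpos w).trans_lt (huniq w huw.ne.symm))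
  refine ⟨hu, fun v hv => ?_⟩
  have := huniq v hv
  have := hpos v
  omega

theorem stmt_18_general (G : SimpleGraph V) [DecidableRel G.Adj]
    (hdeg : ∀ v, G.degree v = 2)
    (S : Finset V)
    (hstable : ∀ v, ((G.degree v : ℝ) - 1) / 2 < (gCrossDeg G S v : ℝ))
    (u : V) (hcrit : gCutMinus G S u = gFt1 G S)
    (huniq : ∀ v, v ≠ u → gCrossDeg G S v < gCrossDeg G S u) :
    Odd (Fintype.card V) ∧
    (gCrossDeg G S u : ℝ) - (G.degree u : ℝ) / 2 = 1 ∧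
    (∀ v, v ≠ u → (gCrossDeg G S v : ℝ) - (G.degree v : ℝ) / 2 = 0) ∧
    gCut G S = ((Fintype.card V : ℝ) + 1) / 2 ∧
    gFt1 G S = ((Fintype.card V : ℝ) - 3) / 2 ∧
    ((Fintype.card V : ℝ) - 3) / 2 = ((Fintype.card V : ℝ) - 2 - 1) / 2 := by
  obtain ⟨hu, hv⟩ := gCrossDeg_eq_of_degree_eq_two hdeg hstable huniq
  have hsum := Fintype.sum_eq_card_add_one hu hv
  have hodd : Odd (Fintype.card V) := by
    have := even_sum_gCrossDeg G S
    rw [hsum, Nat.even_add_one] at this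
    exact Nat.not_even_iff_odd.mp this
  have hcut : gCut G S = ((Fintype.card V : ℝ) + 1) / 2 := by
    rw [gCut, ← Nat.cast_sum, hsum]
    push_cast
    ring
  refine ⟨hodd, ?_, fun v hne => ?_, hcut, ?_, by ring⟩
  · rw [hu, hdeg u]; norm_num
  · rw [hv v hne, hdeg v]; norm_num
  · rw [← hcrit, gCutMinus, hcut, hu]
    push_cast
    ring

theorem stmt_18 (G : SimpleGraph V) [DecidableRel G.Adj]
    (hconn : G.Connected) (hdeg : ∀ v, G.degree v = 2)
    (S : Finset V)
    (hstable : ∀ v, ((G.degree v : ℝ) - 1) / 2 < (gCrossDeg G S v : ℝ))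
    (u : V) (hcrit : gCutMinus G S u = gFt1 G S)
    (huniq : ∀ v, v ≠ u → gCrossDeg G S v < gCrossDeg G S u)
    (hft : gFt1 G S < ((Fintype.card V : ℝ) - 2) / 2) :
    Odd (Fintype.card V) ∧
    (gCrossDeg G S u : ℝ) - (G.degree u : ℝ) / 2 = 1 ∧
    (∀ v, v ≠ u → (gCrossDeg G S v : ℝ) - (G.degree v : ℝ) / 2 = 0) ∧
    gCut G S = ((Fintype.card V : ℝ) + 1) / 2 ∧
    gFt1 G S = ((Fintype.card V : ℝ) - 3) / 2 ∧
    ((Fintype.card V : ℝ) - 3) / 2 = ((Fintype.card V : ℝ) - 2 - 1) / 2 :=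
  stmt_18_general G hdeg S hstable u hcrit huniq
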